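/- arXiv:1901.10072 — 3 statements merged into one kernel-verified Lean document; each statement's English description precedes it below -/
import Mathlib

section
/- The negation m̄ of a belief structure m on Θ admits the following closed form: if |Θ| ≥ 3, then for every B ⊆ Θ, m̄(B) = (∑_{θ : Θ∖{θ} = B} m({θ})) + (if B = Θ then ∑_{A ⊆ Θ, |A| ≥ 2} m(A) else 0). -/
open Finset

variable {α : Type*} [Fintype α] [DecidableEq α]

/-- Set-negation: neg(A) = ⋃_{θ∈A} (Θ∖{θ}). -/
def negSet (A : Finset α) : Finset α := A.biUnion (fun θ => Finset.univ \ {θ})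

/-- Negation of a belief structure: m̄(B) = ∑_{A nonempty, neg(A)=B} m(A). -/
noncomputable def negBS (m : Finset α → ℝ) (B : Finset α) : ℝ :=
  ∑ A ∈ Finset.univ.filter (fun A : Finset α => A.Nonempty ∧ negSet A = B), m A

lemma negSet_singleton (θ : α) : negSet {θ} = Finset.univ \ {θ} := by
  simp [negSet]

lemma negSet_of_two_le {A : Finset α} (h : 2 ≤ A.card) : negSet A = Finset.univ := by
  apply Finset.eq_univ_of_forall
  intro x
  obtain ⟨θ, hθ, hne⟩ := Finset.exists_mem_ne (lt_of_lt_of_le one_lt_two h) x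
  simp only [negSet, Finset.mem_biUnion, Finset.mem_sdiff, Finset.mem_univ, true_and,
    Finset.mem_singleton]
  exact ⟨θ, hθ, fun hx => hne (by rw [hx])⟩

lemma sdiff_singleton_ne_univ (θ : α) : Finset.univ \ {θ} ≠ (Finset.univ : Finset α) := by
  intro h
  rw [Finset.eq_univ_iff_forall] at h
  have := h θ
  simp at this

theorem negBS_closed_form (m : Finset α → ℝ)
    (hcard : 3 ≤ Fintype.card α)
    (hempty : m ∅ = 0) (hsum : ∑ A : Finset α, m A = 1) (B : Finset α) :
    negBS m B =
      (∑ θ ∈ Finset.univ.filter (fun θ : α => Finset.univ \ {θ} = B), m {θ}) +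
      (if B = Finset.univ then
        ∑ A ∈ Finset.univ.filter (fun A : Finset α => 2 ≤ A.card), m A
       else 0) := by
  unfold negBS
  by_cases hB : B = Finset.univ
  · subst hB
    rw [if_pos rfl]
    have h1 : Finset.univ.filter (fun θ : α => Finset.univ \ {θ} = Finset.univ) = ∅ := by
      apply Finset.filter_eq_empty_iff.mpr
      intro θ _
      exact sdiff_singleton_ne_univ θ
    rw [h1, Finset.sum_empty, zero_add]
    congr 1
    ext A
    simp only [Finset.mem_filter, Finset.mem_univ, true_and]
    constructor
    · rintro ⟨hne, hA⟩
      by_contra h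
      push_neg at h
      interval_cases hc : A.card
      · exact absurd (Finset.card_eq_zero.mp hc) (Finset.nonempty_iff_ne_empty.mp hne)
      · obtain ⟨θ, rfl⟩ := Finset.card_eq_one.mp hc
        rw [negSet_singleton] at hA
        exact sdiff_singleton_ne_univ θ hA
    · intro h
      refine ⟨?_, negSet_of_two_le h⟩
      rw [← Finset.card_pos]; omega
  · rw [if_neg hB, add_zero]
    have hset : Finset.univ.filter (fun A : Finset α => A.Nonempty ∧ negSet A = B) =
        (Finset.univ.filter (fun θ : α => Finset.univ \ {θ} = B)).image
          (fun θ => ({θ} : Finset α)) := by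
      ext A
      simp only [Finset.mem_filter, Finset.mem_univ, true_and, Finset.mem_image]
      constructor
      · rintro ⟨hne, hA⟩
        have hc : A.card = 1 := by
          have h1 : 1 ≤ A.card := Finset.card_pos.mpr hne
          by_contra h
          have : 2 ≤ A.card := by omega
          rw [negSet_of_two_le this] at hA
          exact hB hA.symm
        obtain ⟨θ, rfl⟩ := Finset.card_eq_one.mp hc
        exact ⟨θ, by rwa [negSet_singleton] at hA, rfl⟩
      · rintro ⟨θ, hθ, rfl⟩
        exact ⟨Finset.singleton_nonempty θ, by rw [negSet_singleton]; exact hθ⟩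
    rw [hset, Finset.sum_image]
    intro a _ b _ h
    exact Finset.singleton_injective h
end

section
/- If |Θ| = 2, then the negation transformation is an involution on belief structures: m̄̄ = m for every belief structure m on Θ. -/
/-!
When `|Θ| = 2`, `neg` is an involution on all subsets: it fixes `∅` and `Θ` and swaps the two
singletons. Hence each fibre of `neg` is a singleton, so `m̄ = m ∘ neg` whenever `m ∅ = 0`, and
negating twice composes `m` with `neg ∘ neg = id`.
-/

open Finset

variable {α : Type*} [Fintype α] [DecidableEq α]

lemma mem_negSet {A : Finset α} {x : α} : x ∈ negSet A ↔ ∃ θ ∈ A, θ ≠ x := by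
  simp [negSet, eq_comm]

@[simp]
lemma negSet_empty : negSet (∅ : Finset α) = ∅ := biUnion_empty

lemma eq_of_ne_of_ne_of_card_eq_two (hcard : Fintype.card α = 2) {x y z : α}
    (hy : y ≠ x) (hz : z ≠ x) : y = z := by
  have hcard_erase : (univ.erase x).card ≤ 1 := by
    rw [card_erase_of_mem (mem_univ x), card_univ, hcard]
  exact card_le_one.mp hcard_erase y (by simpa using hy) z (by simpa using hz)

lemma negSet_involutive_of_card_eq_two (hcard : Fintype.card α = 2) :
    Function.Involutive (negSet : Finset α → Finset α) := by
  have : Nontrivial α := Fintype.one_lt_card_iff_nontrivial.mp (by omega)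
  intro A
  ext x
  simp only [mem_negSet]
  constructor
  · rintro ⟨θ, ⟨φ, hφA, hφθ⟩, hθx⟩
    by_contra hxA
    have hφx : φ ≠ x := fun h => hxA (h ▸ hφA)
    exact hφθ (eq_of_ne_of_ne_of_card_eq_two hcard hφx hθx)
  · intro hxA
    obtain ⟨θ, hθx⟩ := exists_ne x
    exact ⟨θ, ⟨x, hxA, hθx.symm⟩, hθx⟩

/-- The nonemptiness condition in `negBS` only discards the term `m ∅`. -/
lemma negBS_eq_sum_filter_negSet_eq {m : Finset α → ℝ} (hm : m ∅ = 0) (B : Finset α) :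
    negBS m B = ∑ A ∈ univ.filter (fun A => negSet A = B), m A := by
  rw [negBS, sum_filter, sum_filter]
  refine sum_congr rfl fun A _ => ?_
  rcases A.eq_empty_or_nonempty with rfl | hA
  · simp [hm]
  · simp [hA]

lemma negBS_eq_comp_of_involutive (hinv : Function.Involutive (negSet : Finset α → Finset α))
    {m : Finset α → ℝ} (hm : m ∅ = 0) : negBS m = m ∘ negSet := by
  funext B
  have hfiber : univ.filter (fun A => negSet A = B) = {negSet B} := by
    ext A
    simp only [mem_filter, mem_univ, true_and, mem_singleton]
    exact ⟨fun h => h ▸ (hinv A).symm, fun h => h ▸ hinv B⟩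
  rw [negBS_eq_sum_filter_negSet_eq hm, hfiber, sum_singleton, Function.comp_apply]

theorem double_negation_involution_card_two_general (m : Finset α → ℝ)
    (hcard : Fintype.card α = 2)
    (hempty : m ∅ = 0) :
    negBS (negBS m) = m := by
  have hinv := negSet_involutive_of_card_eq_two hcard
  have hneg_empty : (m ∘ negSet) ∅ = 0 := by simp [hempty]
  rw [negBS_eq_comp_of_involutive hinv hempty, negBS_eq_comp_of_involutive hinv hneg_empty,
    Function.comp_assoc, hinv.comp_self, Function.comp_id]

theorem double_negation_involution_card_two (m : Finset α → ℝ)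
    (hcard : Fintype.card α = 2)
    (hempty : m ∅ = 0) (hnonneg : ∀ A, 0 ≤ m A ∧ m A ≤ 1)
    (hsum : ∑ A : Finset α, m A = 1) :
    negBS (negBS m) = m :=
  double_negation_involution_card_two_general m hcard hempty
end

section
/- Iterating Yager's negation converges to the uniform distribution: for n ≥ 3, the k-th iterate of the negation of a probability distribution p satisfies p_i^{(k)} − 1/n = (−1/(n−1))^k (p_i − 1/n), hence p^{(k)} → (1/n,…,1/n) as k → ∞. -/
open Finset Filter

/-- Yager's negation transformation of a probability distribution. -/
noncomputable def yagerNeg (n : ℕ) (p : Fin n → ℝ) : Fin n → ℝ :=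
  fun i => (1 - p i) / (n - 1)

/-! Every coordinate of `yagerNeg n` is the affine map `x ↦ (1 - x) / (n - 1)`, whose fixed point
is `1 / n` and whose slope is `-1 / (n - 1)`; iterating multiplies the deviation from `1 / n` by
that slope, which has absolute value `< 1` once `n ≥ 3`. -/

lemma yagerNeg_apply_sub_one_div {n : ℕ} (hn : 2 ≤ n) (p : Fin n → ℝ) (i : Fin n) :
    yagerNeg n p i - 1 / n = -(1 / ((n : ℝ) - 1)) * (p i - 1 / n) := by
  have hn' : (2 : ℝ) ≤ n := by exact_mod_cast hn
  have hn0 : (n : ℝ) ≠ 0 := by linarith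
  have hn1 : (n : ℝ) - 1 ≠ 0 := by linarith
  simp only [yagerNeg]
  field_simp
  ring

lemma iterate_yagerNeg_apply_sub_one_div {n : ℕ} (hn : 2 ≤ n) (p : Fin n → ℝ) (k : ℕ) (i : Fin n) :
    (yagerNeg n)^[k] p i - 1 / n = (-(1 / ((n : ℝ) - 1)))^k * (p i - 1 / n) := by
  induction k with
  | zero => simp
  | succ k ih =>
    rw [Function.iterate_succ_apply', yagerNeg_apply_sub_one_div hn, ih, pow_succ']
    ring

lemma abs_neg_one_div_sub_one_lt_one {x : ℝ} (hx : 2 < x) : |-(1 / (x - 1))| < 1 := by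
  rw [abs_neg, abs_of_pos (one_div_pos.mpr (by linarith)), div_lt_one (by linarith)]
  linarith

lemma tendsto_of_sub_eq_pow_mul {u : ℕ → ℝ} {a r b : ℝ} (hr : |r| < 1)
    (hu : ∀ k, u k - a = r ^ k * b) : Tendsto u atTop (nhds a) := by
  have hlim : Tendsto (fun k => r ^ k * b + a) atTop (nhds (0 * b + a)) :=
    ((tendsto_pow_atTop_nhds_zero_of_abs_lt_one hr).mul_const b).add_const a
  rw [zero_mul, zero_add] at hlim
  convert hlim using 2 with k
  linarith [hu k]

theorem yager_iterates_converge_general (n : ℕ) (hn : 3 ≤ n)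
    (p : Fin n → ℝ) :
    (∀ k : ℕ, ∀ i : Fin n,
      (yagerNeg n)^[k] p i - 1 / n = (-(1 / ((n : ℝ) - 1)))^k * (p i - 1 / n)) ∧
    Tendsto (fun k : ℕ => (yagerNeg n)^[k] p) atTop (nhds (fun _ : Fin n => 1 / (n : ℝ))) := by
  have hdev := iterate_yagerNeg_apply_sub_one_div (by omega) p
  have hslope : |-(1 / ((n : ℝ) - 1))| < 1 :=
    abs_neg_one_div_sub_one_lt_one (by exact_mod_cast hn)
  refine ⟨hdev, tendsto_pi_nhds.mpr fun i => ?_⟩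
  exact tendsto_of_sub_eq_pow_mul hslope (hdev · i)

theorem yager_iterates_converge (n : ℕ) (hn : 3 ≤ n)
    (p : Fin n → ℝ) (hp : ∀ i, 0 ≤ p i) (hsum : ∑ i, p i = 1) :
    (∀ k : ℕ, ∀ i : Fin n,
      (yagerNeg n)^[k] p i - 1 / n = (-(1 / ((n : ℝ) - 1)))^k * (p i - 1 / n)) ∧
    Tendsto (fun k : ℕ => (yagerNeg n)^[k] p) atTop (nhds (fun _ : Fin n => 1 / (n : ℝ))) :=
  yager_iterates_converge_general n hn p
end
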